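/- arXiv:1804.07566 — 3 statements merged into one kernel-verified Lean document; each statement's English description precedes it below -/
import Mathlib

section
/- Let $A$ be a $p \times p$ real symmetric positive semidefinite matrix, $M \subset \{1,\dots,p\}$, and suppose all diagonal entries of the principal submatrix $A_M$ are positive. If $\|A_M - I_{|M|}\|_{op} \le \kappa$ with $\kappa \in [0,1)$, then $\|\mathrm{corr}(A_M) - I_{|M|}\|_{op} \le 2\kappa/(1-\kappa)$, where $\mathrm{corr}(B) = D^{-1/2} B D^{-1/2}$ with $D = \mathrm{diag}(B)$. -/
/-!
Write `D` for the diagonal matrix with entries `B i i ^ (-1/2)`, so that `corr B = D B D` and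
`corr B - 1 = D (B - 1) D + (D² - 1)`. Each diagonal entry of `B` lies within `κ` of `1`, hence
`‖D‖² ≤ 1 / (1 - κ)` and `‖D² - 1‖ = maxᵢ |B i i⁻¹ - 1| ≤ κ / (1 - κ)`; both summands are
therefore bounded by `κ / (1 - κ)`.
-/

open Matrix
open scoped Matrix.Norms.L2Operator

/-- Operator (spectral) norm of a real square matrix. -/
noncomputable def opNorm {ι : Type*} [Fintype ι] [DecidableEq ι]
    (A : Matrix ι ι ℝ) : ℝ :=
  ‖Matrix.toEuclideanCLM (𝕜 := ℝ) A‖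

/-- The correlation matrix `D^{-1/2} B D^{-1/2}` with `D = diag(B)`. -/
noncomputable def corr {ι : Type*} (B : Matrix ι ι ℝ) : Matrix ι ι ℝ :=
  Matrix.of fun i j => B i j / (Real.sqrt (B i i) * Real.sqrt (B j j))

lemma abs_inv_sub_one_le {b κ : ℝ} (hκ : κ < 1) (hb : |b - 1| ≤ κ) :
    |b⁻¹ - 1| ≤ κ / (1 - κ) := by
  have hb' : 1 - κ ≤ b := by linarith [(abs_le.mp hb).1]
  have hb0 : 0 < b := by linarith
  have hκ0 : 0 ≤ κ := (abs_nonneg _).trans hb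
  calc |b⁻¹ - 1| = |b - 1| / b := by
        rw [show b⁻¹ - 1 = (1 - b) / b by field_simp, abs_div, abs_of_pos hb0, abs_sub_comm]
    _ ≤ κ / (1 - κ) := div_le_div₀ hκ0 hb (by linarith) hb'

namespace Matrix

lemma l2_opNorm_entry_le {𝕜 m n : Type*} [RCLike 𝕜] [Fintype m] [Fintype n] [DecidableEq n]
    (A : Matrix m n 𝕜) (i : m) (j : n) : ‖A i j‖ ≤ ‖A‖ := by
  have hcol := A.l2_opNorm_mulVec (WithLp.toLp 2 (Pi.single j 1))
  simp only [mulVec_single, MulOpposite.op_one, one_smul, PiLp.toLp_single, PiLp.norm_single,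
    norm_one, mul_one] at hcol
  exact (PiLp.norm_apply_le _ i).trans hcol

variable {ι : Type*} [Fintype ι] [DecidableEq ι]

lemma l2_opNorm_diagonal_le {v : ι → ℝ} {c : ℝ} (hc : 0 ≤ c) (h : ∀ i, |v i| ≤ c) :
    ‖diagonal v‖ ≤ c := by
  rw [l2_opNorm_diagonal]
  exact (pi_norm_le_iff_of_nonneg hc).mpr h

lemma abs_diag_sub_one_le_of_l2_opNorm_sub_one_le {B : Matrix ι ι ℝ} {κ : ℝ} (h : ‖B - 1‖ ≤ κ)
    (i : ι) : |B i i - 1| ≤ κ := by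
  simpa using (B - 1).l2_opNorm_entry_le i i |>.trans h

end Matrix

section corr

variable {ι : Type*} [Fintype ι] [DecidableEq ι]

lemma corr_eq_diagonal_mul_mul_diagonal (B : Matrix ι ι ℝ) :
    corr B = diagonal (fun i => (√(B i i))⁻¹) * B * diagonal (fun i => (√(B i i))⁻¹) := by
  ext i j
  simp only [corr, div_eq_mul_inv, _root_.mul_inv_rev, of_apply, mul_diagonal, diagonal_mul]
  ring

lemma corr_sub_one_eq {B : Matrix ι ι ℝ} (hB : ∀ i, 0 ≤ B i i) :
    corr B - 1 = diagonal (fun i => (√(B i i))⁻¹) * (B - 1) * diagonal (fun i => (√(B i i))⁻¹)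
      + diagonal (fun i => (B i i)⁻¹ - 1) := by
  have hshift : diagonal (fun i => (B i i)⁻¹ - 1)
      = diagonal (fun i => (√(B i i))⁻¹) * diagonal (fun i => (√(B i i))⁻¹) - 1 := by
    simp only [diagonal_mul_diagonal, ← mul_inv, Real.mul_self_sqrt (hB _), ← diagonal_one,
      diagonal_sub]
  rw [hshift, corr_eq_diagonal_mul_mul_diagonal, Matrix.mul_sub, Matrix.sub_mul, Matrix.mul_one]
  abel

lemma l2_opNorm_corr_sub_one_le {B : Matrix ι ι ℝ} {κ : ℝ} (hκ : κ < 1) (h : ‖B - 1‖ ≤ κ) :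
    ‖corr B - 1‖ ≤ 2 * κ / (1 - κ) := by
  have hdiag := abs_diag_sub_one_le_of_l2_opNorm_sub_one_le h
  have hlow : ∀ i, 1 - κ ≤ B i i := fun i => by linarith [(abs_le.mp (hdiag i)).1]
  have hκ0 : 0 ≤ κ := (norm_nonneg _).trans h
  have hκ1 : 0 < 1 - κ := by linarith
  have hscale : ‖diagonal (fun i => (√(B i i))⁻¹)‖ ≤ (√(1 - κ))⁻¹ :=
    l2_opNorm_diagonal_le (by positivity) fun i => by
      rw [abs_of_nonneg (by positivity)]
      exact inv_anti₀ (Real.sqrt_pos.mpr hκ1) (Real.sqrt_le_sqrt (hlow i))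
  have hshift : ‖diagonal (fun i => (B i i)⁻¹ - 1)‖ ≤ κ / (1 - κ) :=
    l2_opNorm_diagonal_le (by positivity) fun i => abs_inv_sub_one_le hκ (hdiag i)
  rw [corr_sub_one_eq fun i => hκ1.le.trans (hlow i)]
  calc _ ≤ ‖diagonal (fun i => (√(B i i))⁻¹)‖ * ‖B - 1‖ * ‖diagonal (fun i => (√(B i i))⁻¹)‖
          + ‖diagonal (fun i => (B i i)⁻¹ - 1)‖ := by
        grw [norm_add_le, l2_opNorm_mul, l2_opNorm_mul]
    _ ≤ (√(1 - κ))⁻¹ * κ * (√(1 - κ))⁻¹ + κ / (1 - κ) := by gcongr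
    _ = 2 * κ / (1 - κ) := by
        rw [mul_right_comm, ← sq, inv_pow, Real.sq_sqrt hκ1.le]
        ring

end corr

theorem stmt_4_general (p : ℕ) (A : Matrix (Fin p) (Fin p) ℝ)
    (M : Finset (Fin p))
    (κ : ℝ) (hκ : κ ∈ Set.Ico (0 : ℝ) 1)
    (hop : opNorm ((A.submatrix (Subtype.val : {x // x ∈ M} → Fin p)
        (Subtype.val : {x // x ∈ M} → Fin p)) - 1) ≤ κ) :
    opNorm (corr (A.submatrix (Subtype.val : {x // x ∈ M} → Fin p)
        (Subtype.val : {x // x ∈ M} → Fin p)) - 1) ≤ 2 * κ / (1 - κ) :=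
  l2_opNorm_corr_sub_one_le hκ.2 hop

theorem stmt_4 (p : ℕ) (A : Matrix (Fin p) (Fin p) ℝ) (hA : A.PosSemidef)
    (M : Finset (Fin p)) (hdiag : ∀ i ∈ M, 0 < A i i)
    (κ : ℝ) (hκ : κ ∈ Set.Ico (0 : ℝ) 1)
    (hop : opNorm ((A.submatrix (Subtype.val : {x // x ∈ M} → Fin p)
        (Subtype.val : {x // x ∈ M} → Fin p)) - 1) ≤ κ) :
    opNorm (corr (A.submatrix (Subtype.val : {x // x ∈ M} → Fin p)
        (Subtype.val : {x // x ∈ M} → Fin p)) - 1) ≤ 2 * κ / (1 - κ) :=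
  stmt_4_general p A M κ hκ hop
end

section
/- Let $\mu \ge 0$, $r \ge 1$, $\zeta \sim \mathcal{N}(0,1)$, $V \sim \chi^2(r)$ independent of $\zeta$, and set $T = (\mu + \zeta)/\sqrt{V/r}$. Then for any $\eta \in (0,1]$ with $2\sqrt{2\log(1/\eta)/r} < 1$, $\mathbb{P}\big(T \ge (\mu + \sqrt{2\log(1/\eta)})/(1 - 2\sqrt{2\log(1/\eta)/r})\big) \le 2\eta$. -/
/-!
If `ζ < √(2 log (1/η))` and `√(V/r) > 1 - 2√(2 log (1/η) / r)`, then the numerator of `T` is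
below that of the threshold and its denominator above, so `T` stays below the threshold.
Hence the event is covered by two tails, each of probability at most `η`: the Gaussian one by
the sub-Gaussian Chernoff bound, and the lower tail of `χ²(r) = Γ(r/2, 1/2)` by a Chernoff
bound using its moment generating function `(1 - 2t)^(-r/2)` and `log (1 + y) ≥ 2y / (y + 2)`.
A union bound gives `2η`.
-/

open MeasureTheory ProbabilityTheory Real
open scoped ENNReal NNReal

lemma le_or_le_of_div_le_div {m a z d s : ℝ} (ha : 0 ≤ m + a) (hd : 0 < d)
    (h : (m + a) / d ≤ (m + z) / s) : a ≤ z ∨ s ≤ d := by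
  by_contra! hcon
  obtain ⟨hz, hs⟩ := hcon
  have : (m + z) / s < (m + a) / s := div_lt_div_of_pos_right (by linarith) (hd.trans hs)
  have : (m + a) / s ≤ (m + a) / d := div_le_div_of_nonneg_left ha hd hs.le
  linarith

lemma measureReal_preimage_eq_of_map_eq {Ω β : Type*} [MeasurableSpace Ω] [MeasurableSpace β]
    {μ : Measure Ω} {X : Ω → β} {ν : Measure β} [NeZero ν] (hX : μ.map X = ν)
    {s : Set β} (hs : MeasurableSet s) : μ.real (X ⁻¹' s) = ν.real s := by
  rw [← hX, map_measureReal_apply_of_aemeasurable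
    (aemeasurable_of_map_neZero (by rw [hX]; infer_instance)) hs]

namespace ProbabilityTheory

lemma gaussianReal_real_Ici_sqrt_le (x : ℝ) (hx : 0 ≤ x) :
    (gaussianReal 0 1).real (Set.Ici (√(2 * x))) ≤ exp (-x) := by
  have h : HasSubgaussianMGF id (1 : ℝ≥0) (gaussianReal 0 1) :=
    ⟨integrable_exp_mul_gaussianReal, fun t ↦ by simp [mgf_id_gaussianReal]⟩
  refine (h.measure_ge_le (sqrt_nonneg (2 * x))).trans_eq ?_
  rw [sq_sqrt (by positivity), NNReal.coe_one, mul_one]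
  congr 1
  ring

section Gamma

variable {a r t : ℝ}

lemma lintegral_exp_mul_gammaMeasure (ha : 0 < a) (hr : 0 < r) (ht : t < r) :
    ∫⁻ x, ENNReal.ofReal (exp (t * x)) ∂gammaMeasure a r =
      ENNReal.ofReal ((r / (r - t)) ^ a) := by
  have hrt : 0 < r - t := by linarith
  rw [gammaMeasure, lintegral_withDensity_eq_lintegral_mul _
    (show Measurable (gammaPDF a r) from (measurable_gammaPDFReal a r).ennreal_ofReal)
    (by fun_prop)]
  have key : ∀ x, (gammaPDF a r * fun x ↦ ENNReal.ofReal (exp (t * x))) x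
      = ENNReal.ofReal ((r / (r - t)) ^ a) * gammaPDF a (r - t) x := by
    intro x
    rcases lt_or_ge x 0 with hx | hx
    · simp [gammaPDF_of_neg hx]
    · rw [Pi.mul_apply, gammaPDF_of_nonneg hx, gammaPDF_of_nonneg hx,
        ← ENNReal.ofReal_mul (by positivity), ← ENNReal.ofReal_mul (by positivity)]
      congr 1
      have hG : Gamma a ≠ 0 := (Gamma_pos_of_pos ha).ne'
      rw [div_rpow hr.le hrt.le]
      field_simp
      rw [mul_assoc, ← exp_add]
      ring_nf
  rw [lintegral_congr key, lintegral_const_mul' _ _ ENNReal.ofReal_ne_top,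
    lintegral_gammaPDF_eq_one ha hrt, mul_one]

lemma integrable_exp_mul_gammaMeasure (ha : 0 < a) (hr : 0 < r) (ht : t < r) :
    Integrable (fun x ↦ exp (t * x)) (gammaMeasure a r) := by
  refine ⟨by fun_prop,
    (hasFiniteIntegral_iff_ofReal (.of_forall fun _ ↦ (exp_pos _).le)).2 ?_⟩
  rw [lintegral_exp_mul_gammaMeasure ha hr ht]
  exact ENNReal.ofReal_lt_top

lemma mgf_id_gammaMeasure (ha : 0 < a) (hr : 0 < r) (ht : t < r) :
    mgf id (gammaMeasure a r) t = (r / (r - t)) ^ a := by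
  have hrt : 0 < r - t := by linarith
  rw [mgf, integral_eq_lintegral_of_nonneg_ae (.of_forall fun _ ↦ (exp_pos _).le) (by fun_prop)]
  simp only [id, lintegral_exp_mul_gammaMeasure ha hr ht]
  exact ENNReal.toReal_ofReal (by positivity)

lemma gammaMeasure_real_Iic_le (ha : 0 < a) (hr : 0 < r) {s : ℝ} (hs : 0 ≤ s) (v : ℝ) :
    (gammaMeasure a r).real (Set.Iic v) ≤ exp (s * v) * (r / (r + s)) ^ a := by
  have := isProbabilityMeasure_gammaMeasure ha hr
  have h := measure_le_le_exp_mul_mgf (X := id) (μ := gammaMeasure a r) v (neg_nonpos.2 hs)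
    (integrable_exp_mul_gammaMeasure ha hr (by linarith))
  rwa [mgf_id_gammaMeasure ha hr (by linarith), neg_neg, sub_neg_eq_add] at h

end Gamma

-- The lower tail of `χ²(k)`, in the form of Laurent–Massart.
lemma gammaMeasure_half_real_Iic_le {k x : ℝ} (hk : 0 < k) (hx : 0 ≤ x)
    (hsmall : 2 * √(2 * x / k) ≤ 1) :
    (gammaMeasure (k / 2) (1 / 2)).real (Set.Iic (k * (1 - 2 * √(2 * x / k)) ^ 2)) ≤
      exp (-x) := by
  set y := √(2 * x / k)
  have hy : 0 ≤ y := sqrt_nonneg _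
  have hxy : x = k * y ^ 2 / 2 := by
    rw [sq_sqrt (by positivity)]; field_simp
  refine (gammaMeasure_real_Iic_le (by positivity) one_half_pos (s := y / 2)
    (by positivity) _).trans ?_
  have hq : (1 / 2 : ℝ) / (1 / 2 + y / 2) = (1 + y)⁻¹ := by field_simp
  rw [hq, rpow_def_of_pos (by positivity), log_inv, ← exp_add, exp_le_exp]
  have hlog := le_log_one_add_of_nonneg hy
  rw [div_le_iff₀ (by positivity)] at hlog
  have hpoly : (y * (1 - 2 * y) ^ 2 + y ^ 2) * (y + 2) ≤ 2 * y := by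
    have : 0 ≤ 5 - 5 * y - 4 * y ^ 2 := by nlinarith
    nlinarith [mul_nonneg (sq_nonneg y) this]
  have hkey : y * (1 - 2 * y) ^ 2 + y ^ 2 ≤ log (1 + y) :=
    le_of_mul_le_mul_right (hpoly.trans hlog) (by positivity)
  rw [hxy]
  linarith [mul_le_mul_of_nonneg_left hkey hk.le]

end ProbabilityTheory

theorem stmt_13_general (r : ℕ) (hr : 1 ≤ r) (μ₀ : ℝ) (hμ₀ : 0 ≤ μ₀)
    {Ω : Type*} [MeasurableSpace Ω] (μ : Measure Ω) [IsProbabilityMeasure μ]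
    (ζ V : Ω → ℝ)
    (hζ : μ.map ζ = gaussianReal 0 1)
    (hV : μ.map V = gammaMeasure ((r : ℝ) / 2) (1 / 2))
    (η : ℝ) (hη : η ∈ Set.Ioc (0 : ℝ) 1)
    (hsmall : 2 * Real.sqrt (2 * Real.log (1 / η) / r) < 1) :
    μ {ω | (μ₀ + Real.sqrt (2 * Real.log (1 / η))) /
          (1 - 2 * Real.sqrt (2 * Real.log (1 / η) / r)) ≤
        (μ₀ + ζ ω) / Real.sqrt (V ω / r)} ≤
      ENNReal.ofReal (2 * η) := by
  obtain ⟨hη0, hη1⟩ := hη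
  set L := log (1 / η)
  set d := 1 - 2 * √(2 * L / r)
  have hL : 0 ≤ L := log_nonneg (by rw [le_div_iff₀ hη0]; linarith)
  have hexpL : exp (-L) = η := by simp only [L, one_div, log_inv, neg_neg, exp_log hη0]
  have hr0 : (0 : ℝ) < r := by exact_mod_cast hr
  have hd : 0 < d := by linarith
  have hevent : {ω | (μ₀ + √(2 * L)) / d ≤ (μ₀ + ζ ω) / √(V ω / r)} ⊆
      ζ ⁻¹' Set.Ici √(2 * L) ∪ V ⁻¹' Set.Iic (r * d ^ 2) := fun ω hω ↦
    (le_or_le_of_div_le_div (by positivity) hd hω).imp id fun h ↦ by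
      rw [sqrt_le_left hd.le, div_le_iff₀ hr0] at h
      exact h.trans_eq (mul_comm _ _)
  have := isProbabilityMeasure_gammaMeasure (a := r / 2) (by positivity) one_half_pos
  have hgauss : μ.real (ζ ⁻¹' Set.Ici √(2 * L)) ≤ η := by
    rw [measureReal_preimage_eq_of_map_eq hζ measurableSet_Ici, ← hexpL]
    exact gaussianReal_real_Ici_sqrt_le L hL
  have hchi : μ.real (V ⁻¹' Set.Iic (r * d ^ 2)) ≤ η := by
    rw [measureReal_preimage_eq_of_map_eq hV measurableSet_Iic, ← hexpL]
    exact gammaMeasure_half_real_Iic_le hr0 hL hsmall.le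
  rw [← ofReal_measureReal]
  refine ENNReal.ofReal_le_ofReal ?_
  calc μ.real _ ≤ μ.real (ζ ⁻¹' Set.Ici √(2 * L) ∪ V ⁻¹' Set.Iic (r * d ^ 2)) :=
        measureReal_mono hevent
    _ ≤ μ.real (ζ ⁻¹' Set.Ici √(2 * L)) + μ.real (V ⁻¹' Set.Iic (r * d ^ 2)) :=
        measureReal_union_le _ _
    _ ≤ 2 * η := by linarith

theorem stmt_13 (r : ℕ) (hr : 1 ≤ r) (μ₀ : ℝ) (hμ₀ : 0 ≤ μ₀)
    {Ω : Type*} [MeasurableSpace Ω] (μ : Measure Ω) [IsProbabilityMeasure μ]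
    (ζ V : Ω → ℝ)
    (hζ : μ.map ζ = gaussianReal 0 1)
    (hV : μ.map V = gammaMeasure ((r : ℝ) / 2) (1 / 2))
    (hindep : IndepFun ζ V μ)
    (η : ℝ) (hη : η ∈ Set.Ioc (0 : ℝ) 1)
    (hsmall : 2 * Real.sqrt (2 * Real.log (1 / η) / r) < 1) :
    μ {ω | (μ₀ + Real.sqrt (2 * Real.log (1 / η))) /
          (1 - 2 * Real.sqrt (2 * Real.log (1 / η) / r)) ≤
        (μ₀ + ζ ω) / Real.sqrt (V ω / r)} ≤
      ENNReal.ofReal (2 * η) :=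
  stmt_13_general r hr μ₀ hμ₀ μ ζ V hζ hV η hη hsmall
end

section
/- Let $1 \le s \le n$ and $s \le p$, and let $\{w_j\}_{j \in J}$ be a family of unit vectors in $\mathbb{R}^n$ indexed by the set $J$ of pairs $(M, i)$ with $M \subset \{1,\dots,p\}$ nonempty, $|M| \le s$, and $i \in M$. If $\xi \sim \mathcal{N}(0, I_n)$, then $\mathbb{E}[\max_{j \in J} |w_j^t \xi|] \le \sqrt{2 s \log(6p/s)}$. -/
/-!
If every `X j` is `1`-sub-Gaussian, then for `l ≥ 0` Jensen's inequality and a union bound give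
`exp (l 𝔼 max_j |X j|) ≤ 𝔼 exp (l max_j |X j|) ≤ ∑_j (𝔼 e^{l X j} + 𝔼 e^{-l X j}) ≤ 2 |J| e^{l²/2}`,
and `l = √(2 log (2 |J|))` yields `𝔼 max_j |X j| ≤ √(2 log (2 |J|))`. Each `wⱼᵗ ξ` is
`1`-sub-Gaussian, being a sum of independent Gaussians with total variance `‖wⱼ‖² = 1`.
Finally `|J| ≤ s ∑_{i ≤ s} (p choose i) ≤ s (e p / s)^s` and `2 s eˢ ≤ (2e)ˢ ≤ 6ˢ`,
so `log (2 |J|) ≤ s log (6p/s)`.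
-/

open MeasureTheory ProbabilityTheory Real Finset
open scoped NNReal

-- the index set `J` of pairs `(M, i)` with `i ∈ M`
abbrev PointedFinset (α : Type*) (s : ℕ) : Type _ :=
  {q : Σ M : Finset α, {x // x ∈ M} // q.1.card ≤ s}

lemma PointedFinset.nonempty {α : Type*} [Fintype α] {s : ℕ} (hs : 1 ≤ s)
    (hsα : s ≤ Fintype.card α) : Nonempty (PointedFinset α s) :=
  have : Nonempty α := Fintype.card_pos_iff.1 (hs.trans hsα)
  let a := Classical.arbitrary α
  ⟨⟨⟨{a}, ⟨a, mem_singleton_self a⟩⟩, by simpa using hs⟩⟩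

lemma card_subtype_card_le_le_sum_choose {α : Type*} [Fintype α] (s : ℕ) :
    Fintype.card {M : Finset α // M.card ≤ s}
      ≤ ∑ i ∈ range (s + 1), (Fintype.card α).choose i := by
  classical
  rw [Fintype.card_subtype]
  calc #{M : Finset α | M.card ≤ s}
      ≤ #((range (s + 1)).biUnion fun i ↦ powersetCard i (univ : Finset α)) := by
        refine card_le_card fun M hM ↦ mem_biUnion.2 ⟨M.card, ?_, ?_⟩
        · simpa [Nat.lt_succ_iff] using hM
        · exact mem_powersetCard.2 ⟨subset_univ M, rfl⟩
    _ ≤ ∑ i ∈ range (s + 1), #(powersetCard i (univ : Finset α)) := card_biUnion_le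
    _ = ∑ i ∈ range (s + 1), (Fintype.card α).choose i := by simp [card_powersetCard]

lemma PointedFinset.card_le {α : Type*} [Fintype α] (s : ℕ) :
    Fintype.card (PointedFinset α s)
      ≤ s * ∑ i ∈ range (s + 1), (Fintype.card α).choose i := by
  rw [Fintype.card_congr (Equiv.subtypeSigmaEquiv (fun M : Finset α ↦ {x // x ∈ M})
    fun M ↦ M.card ≤ s), Fintype.card_sigma]
  calc ∑ M : {M : Finset α // M.card ≤ s}, Fintype.card {x // x ∈ M.1}
      ≤ ∑ _M : {M : Finset α // M.card ≤ s}, s :=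
        sum_le_sum fun M _ ↦ (Fintype.card_coe M.1).trans_le M.2
    _ ≤ s * ∑ i ∈ range (s + 1), (Fintype.card α).choose i := by
        rw [sum_const, card_univ, smul_eq_mul, mul_comm]
        exact Nat.mul_le_mul_left s (card_subtype_card_le_le_sum_choose s)

lemma sum_range_choose_le_div_pow_mul_exp {n s : ℕ} (hs : 0 < s) (hsn : s ≤ n) :
    ∑ i ∈ range (s + 1), (n.choose i : ℝ) ≤ ((n : ℝ) / s) ^ s * exp s := by
  have hs' : (0 : ℝ) < s := by exact_mod_cast hs
  have hns : 1 ≤ (n : ℝ) / s := by rw [one_le_div hs']; exact_mod_cast hsn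
  calc ∑ i ∈ range (s + 1), (n.choose i : ℝ)
      ≤ ∑ i ∈ range (s + 1), ((n : ℝ) / s) ^ s * ((s : ℝ) ^ i / i.factorial) := by
        refine sum_le_sum fun i hi ↦ ?_
        have hi : i ≤ s := Nat.lt_succ_iff.1 (mem_range.1 hi)
        calc (n.choose i : ℝ) ≤ (n : ℝ) ^ i / i.factorial := Nat.choose_le_pow_div i n
          _ = ((n : ℝ) / s) ^ i * ((s : ℝ) ^ i / i.factorial) := by
              rw [div_pow]; field_simp
          _ ≤ ((n : ℝ) / s) ^ s * ((s : ℝ) ^ i / i.factorial) := by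
              gcongr
    _ = ((n : ℝ) / s) ^ s * ∑ i ∈ range (s + 1), (s : ℝ) ^ i / i.factorial := by rw [mul_sum]
    _ ≤ ((n : ℝ) / s) ^ s * exp s := by gcongr; exact sum_le_exp_of_nonneg hs'.le _

lemma two_mul_mul_exp_le_six_pow {s : ℕ} (hs : 1 ≤ s) : 2 * (s : ℝ) * exp s ≤ 6 ^ s := by
  have h2s : 2 * s ≤ 2 ^ s := by
    obtain ⟨k, rfl⟩ := Nat.exists_eq_add_of_le' hs
    rw [pow_succ, mul_comm]
    exact Nat.mul_le_mul_right 2 Nat.lt_two_pow_self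
  calc 2 * (s : ℝ) * exp s ≤ 2 ^ s * exp 1 ^ s := by
        rw [exp_one_pow]; gcongr; exact_mod_cast h2s
    _ = (2 * exp 1) ^ s := (mul_pow _ _ _).symm
    _ ≤ 6 ^ s := by gcongr; linarith [exp_one_lt_d9]

lemma PointedFinset.log_two_mul_card_le {α : Type*} [Fintype α] {s : ℕ} (hs : 1 ≤ s)
    (hsα : s ≤ Fintype.card α) :
    log (2 * Fintype.card (PointedFinset α s))
      ≤ s * log (6 * Fintype.card α / s) := by
  have := PointedFinset.nonempty hs hsα
  have hcard : (Fintype.card (PointedFinset α s) : ℝ)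
      ≤ s * ∑ i ∈ range (s + 1), ((Fintype.card α).choose i : ℝ) := by
    exact_mod_cast PointedFinset.card_le s
  have hpos : (0 : ℝ) < 6 * Fintype.card α / s := by
    have : (0 : ℝ) < Fintype.card α := by exact_mod_cast hs.trans hsα
    positivity
  rw [← log_pow]
  refine log_le_log (by positivity) ?_
  calc 2 * (Fintype.card (PointedFinset α s) : ℝ)
      ≤ 2 * (s * ((Fintype.card α / s) ^ s * exp s)) := by
        grw [hcard, sum_range_choose_le_div_pow_mul_exp hs hsα]
    _ = 2 * s * exp s * (Fintype.card α / s) ^ s := by ring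
    _ ≤ 6 ^ s * (Fintype.card α / s) ^ s := by gcongr; exact two_mul_mul_exp_le_six_pow hs
    _ = (6 * Fintype.card α / s) ^ s := by rw [← mul_pow, mul_div_assoc]

lemma hasSubgaussianMGF_id_gaussianReal (v : ℝ≥0) :
    HasSubgaussianMGF id v (gaussianReal 0 v) where
  integrable_exp_mul := integrable_exp_mul_gaussianReal
  mgf_le t := by simp [mgf_id_gaussianReal]

lemma hasSubgaussianMGF_sum_mul_pi_gaussianReal {ι : Type*} [Fintype ι] (w : ι → ℝ) :
    HasSubgaussianMGF (fun ξ : ι → ℝ ↦ ∑ t, w t * ξ t) (∑ t, ‖w t‖₊ ^ 2)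
      (Measure.pi fun _ ↦ gaussianReal 0 1) := by
  have hcoord (t : ι) : HasSubgaussianMGF (fun ξ : ι → ℝ ↦ ξ t) 1
      (Measure.pi fun _ ↦ gaussianReal 0 1) := by
    have h := hasSubgaussianMGF_id_gaussianReal 1
    rw [← (measurePreserving_eval (fun _ : ι ↦ gaussianReal 0 1) t).map_eq] at h
    exact (HasSubgaussianMGF.id_map_iff (measurable_pi_apply t).aemeasurable).1 h
  have hindep : iIndepFun (fun t (ξ : ι → ℝ) ↦ w t * ξ t) (Measure.pi fun _ ↦ gaussianReal 0 1) :=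
    iIndepFun_pi (X := fun t x ↦ w t * x) fun t ↦ by fun_prop
  refine HasSubgaussianMGF.sum_of_iIndepFun hindep (c := fun t ↦ ‖w t‖₊ ^ 2) fun t _ ↦ ?_
  convert (hcoord t).const_mul (w t)
  ext
  -- `const_mul` states its parameter as a bare subtype element, which `simp` cannot see through
  change _ = w t ^ 2 * 1
  simp

lemma exp_mul_iSup_abs_le_sum {ι : Type*} [Fintype ι] [Nonempty ι] {l : ℝ} (hl : 0 ≤ l)
    (x : ι → ℝ) : exp (l * ⨆ j, |x j|) ≤ ∑ j, (exp (l * x j) + exp (-l * x j)) := by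
  obtain ⟨j, hj⟩ := exists_eq_ciSup_of_finite (f := fun j ↦ |x j|)
  rw [← hj, ← abs_of_nonneg hl, ← abs_mul, abs_of_nonneg hl]
  calc exp |l * x j| ≤ exp (l * x j) + exp (-l * x j) := by rw [neg_mul]; exact exp_abs_le _
    _ ≤ ∑ i, (exp (l * x i) + exp (-l * x i)) :=
      single_le_sum (f := fun i ↦ exp (l * x i) + exp (-l * x i))
        (fun i _ ↦ by positivity) (mem_univ j)

lemma iSup_abs_le_sum_abs {ι : Type*} [Fintype ι] [Nonempty ι] (x : ι → ℝ) :
    ⨆ j, |x j| ≤ ∑ j, |x j| :=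
  ciSup_le fun j ↦ single_le_sum (fun i _ ↦ abs_nonneg (x i)) (mem_univ j)

lemma integrable_iSup_abs {Ω ι : Type*} [MeasurableSpace Ω] {μ : Measure Ω} [Fintype ι]
    [Nonempty ι] {X : ι → Ω → ℝ} (hX : ∀ j, Integrable (X j) μ) :
    Integrable (fun ω ↦ ⨆ j, |X j ω|) μ := by
  refine (integrable_finsetSum univ fun j _ ↦ (hX j).abs).mono'
    (AEMeasurable.iSup fun j ↦ (hX j).aemeasurable.abs).aestronglyMeasurable ?_
  refine .of_forall fun ω ↦ ?_
  rw [Real.norm_eq_abs, abs_of_nonneg]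
  · simpa using iSup_abs_le_sum_abs fun j ↦ X j ω
  · exact (abs_nonneg _).trans
      (le_ciSup (Finite.bddAbove_range fun j ↦ |X j ω|) (Classical.arbitrary ι))

lemma mul_integral_iSup_abs_le_of_hasSubgaussianMGF {Ω ι : Type*} [MeasurableSpace Ω]
    {μ : Measure Ω} [IsProbabilityMeasure μ] [Fintype ι] [Nonempty ι] {X : ι → Ω → ℝ}
    {c : ℝ≥0} (hX : ∀ j, HasSubgaussianMGF (X j) c μ) {l : ℝ} (hl : 0 ≤ l) :
    l * ∫ ω, ⨆ j, |X j ω| ∂μ ≤ log (2 * Fintype.card ι) + c * l ^ 2 / 2 := by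
  set M := fun ω ↦ ⨆ j, |X j ω|
  have hM : Integrable M μ := integrable_iSup_abs fun j ↦ (hX j).integrable
  have hpair (j : ι) : Integrable (fun ω ↦ exp (l * X j ω) + exp (-l * X j ω)) μ :=
    ((hX j).integrable_exp_mul l).add ((hX j).integrable_exp_mul (-l))
  have hsum : Integrable (fun ω ↦ ∑ j, (exp (l * X j ω) + exp (-l * X j ω))) μ :=
    integrable_finsetSum _ fun j _ ↦ hpair j
  have hexpM : Integrable (fun ω ↦ exp (l * M ω)) μ := by
    refine hsum.mono' (by fun_prop) (.of_forall fun ω ↦ ?_)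
    rw [norm_of_nonneg (exp_pos _).le]
    exact exp_mul_iSup_abs_le_sum hl _
  have jensen : exp (l * ∫ ω, M ω ∂μ) ≤ ∫ ω, exp (l * M ω) ∂μ := by
    rw [← integral_const_mul]
    exact convexOn_exp.map_integral_le continuousOn_exp isClosed_univ
      (.of_forall fun _ ↦ Set.mem_univ _) (hM.const_mul l) hexpM
  have union_bound : ∫ ω, exp (l * M ω) ∂μ ≤ 2 * Fintype.card ι * exp (c * l ^ 2 / 2) :=
    calc ∫ ω, exp (l * M ω) ∂μ
        ≤ ∫ ω, ∑ j, (exp (l * X j ω) + exp (-l * X j ω)) ∂μ :=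
          integral_mono hexpM hsum fun ω ↦ exp_mul_iSup_abs_le_sum hl _
      _ = ∑ j, (mgf (X j) μ l + mgf (X j) μ (-l)) := by
          rw [integral_finsetSum _ fun j _ ↦ hpair j]
          refine sum_congr rfl fun j _ ↦ ?_
          rw [integral_add ((hX j).integrable_exp_mul l) ((hX j).integrable_exp_mul (-l))]
          rfl
      _ ≤ ∑ _j : ι, 2 * exp (c * l ^ 2 / 2) := by
          refine sum_le_sum fun j _ ↦ ?_
          have h₁ := (hX j).mgf_le l
          have h₂ := (hX j).mgf_le (-l)
          rw [neg_sq] at h₂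
          linarith
      _ = 2 * Fintype.card ι * exp (c * l ^ 2 / 2) := by simp; ring
  rw [← log_exp (c * l ^ 2 / 2), ← log_mul (by positivity) (exp_pos _).ne',
    le_log_iff_exp_le (by positivity)]
  exact jensen.trans union_bound

lemma integral_iSup_abs_le_sqrt_two_mul_log {Ω ι : Type*} [MeasurableSpace Ω]
    {μ : Measure Ω} [IsProbabilityMeasure μ] [Fintype ι] [Nonempty ι] {X : ι → Ω → ℝ}
    (hX : ∀ j, HasSubgaussianMGF (X j) 1 μ) :
    ∫ ω, ⨆ j, |X j ω| ∂μ ≤ sqrt (2 * log (2 * Fintype.card ι)) := by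
  set L := log (2 * Fintype.card ι)
  have hL : 0 < L := log_pos <| by
    have : (1 : ℝ) ≤ Fintype.card ι := by exact_mod_cast Fintype.card_pos
    linarith
  have hl : 0 < sqrt (2 * L) := by positivity
  -- `l = sqrt (2 L)` minimises `(L + l ^ 2 / 2) / l`
  have key := mul_integral_iSup_abs_le_of_hasSubgaussianMGF hX hl.le
  rw [NNReal.coe_one, one_mul, sq_sqrt (by positivity)] at key
  refine le_of_mul_le_mul_left (key.trans_eq ?_) hl
  rw [mul_self_sqrt (by positivity)]
  ring

theorem stmt_19_general (n p s : ℕ) (hs : 1 ≤ s) (hsp : s ≤ p)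
    (w : {q : Σ M : Finset (Fin p), {x // x ∈ M} // q.1.card ≤ s} → (Fin n → ℝ))
    (hw : ∀ j, Real.sqrt (∑ t, (w j t) ^ 2) = 1) :
    (∫ ξ : Fin n → ℝ,
        (⨆ j : {q : Σ M : Finset (Fin p), {x // x ∈ M} // q.1.card ≤ s},
          |∑ t, w j t * ξ t|)
        ∂(Measure.pi fun _ : Fin n => gaussianReal 0 1)) ≤
      Real.sqrt (2 * s * Real.log (6 * p / s)) := by
  have hsp' : s ≤ Fintype.card (Fin p) := by simpa using hsp
  have := PointedFinset.nonempty hs hsp'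
  have hsub (j : PointedFinset (Fin p) s) : HasSubgaussianMGF (fun ξ ↦ ∑ t, w j t * ξ t) 1
      (Measure.pi fun _ ↦ gaussianReal 0 1) := by
    convert hasSubgaussianMGF_sum_mul_pi_gaussianReal (w j)
    ext
    simpa using (sqrt_eq_one.1 (hw j)).symm
  calc _ ≤ sqrt (2 * log (2 * Fintype.card (PointedFinset (Fin p) s))) :=
        integral_iSup_abs_le_sqrt_two_mul_log hsub
    _ ≤ sqrt (2 * s * log (6 * p / s)) := by
        rw [mul_assoc]
        gcongr
        simpa using PointedFinset.log_two_mul_card_le hs hsp'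

theorem stmt_19 (n p s : ℕ) (hs : 1 ≤ s) (hsn : s ≤ n) (hsp : s ≤ p)
    (w : {q : Σ M : Finset (Fin p), {x // x ∈ M} // q.1.card ≤ s} → (Fin n → ℝ))
    (hw : ∀ j, Real.sqrt (∑ t, (w j t) ^ 2) = 1) :
    (∫ ξ : Fin n → ℝ,
        (⨆ j : {q : Σ M : Finset (Fin p), {x // x ∈ M} // q.1.card ≤ s},
          |∑ t, w j t * ξ t|)
        ∂(Measure.pi fun _ : Fin n => gaussianReal 0 1)) ≤
      Real.sqrt (2 * s * Real.log (6 * p / s)) :=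
  stmt_19_general n p s hs hsp w hw
end
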